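/- Let x = (0,0,1), y₁ = (√(1-α²), 0, α), y₂ = (0, √(1-α²), α), y₃ = (0, -√(1-α²), α) in R³ with 0 < α < 1. Then |⟨x, yᵢ⟩| = α for i = 1,2,3, the vectors y₁, y₂, y₃ span R³, and for every 0 < ε < α the unit vector x' = (-ε, 0, √(1-ε²)) satisfies |⟨x', yᵢ⟩| < α for i = 1,2,3. Hence x is isolable but not deficient in {x, y₁, y₂, y₃}. -/

import Mathlib

/-!
The vectors `y i` are linearly independent, so they span `ℝ³` and `x` is not deficient.
All of them have non-negative first coordinate, so tilting `x` towards `-e₁` lowers every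
`⟪x, y i⟫` strictly below `α`; since the tilt `ε` is smaller than `α`, it cannot push any of
them down to `-α`.
-/

open scoped RealInnerProductSpace
abbrev E3 := EuclideanSpace ℝ (Fin 3)
noncomputable def v3 (a b c : ℝ) : E3 := (WithLp.equiv 2 (Fin 3 → ℝ)).symm ![a, b, c]

lemma v3_apply (a b c : ℝ) (i : Fin 3) : v3 a b c i = ![a, b, c] i := rfl

lemma inner_v3 (a b c d e f : ℝ) : ⟪v3 a b c, v3 d e f⟫ = a * d + b * e + c * f := by
  simp only [PiLp.inner_apply, v3_apply, RCLike.inner_apply, Real.ringHom_apply,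
    Fin.sum_univ_three, Matrix.cons_val_zero, Matrix.cons_val_one, Matrix.cons_val]
  ring

lemma norm_v3 (a b c : ℝ) : ‖v3 a b c‖ = √(a ^ 2 + b ^ 2 + c ^ 2) := by
  simp [EuclideanSpace.norm_eq, Fin.sum_univ_three, v3_apply, sq_abs]

lemma linearIndependent_v3_triple {a b c : ℝ} (ha : a ≠ 0) (hb : b ≠ 0) (hc : c ≠ 0) :
    LinearIndependent ℝ ![v3 a 0 c, v3 0 b c, v3 0 (-b) c] := by
  rw [Fintype.linearIndependent_iff]
  intro g hg
  have h0 : g 0 * a = 0 := by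
    simpa [Fin.sum_univ_three, v3_apply] using congrArg (· 0) hg
  have h1 : (g 1 - g 2) * b = 0 := by
    simpa [Fin.sum_univ_three, v3_apply, sub_mul, ← sub_eq_add_neg] using congrArg (· 1) hg
  have h2 : (g 0 + g 1 + g 2) * c = 0 := by
    simpa [Fin.sum_univ_three, v3_apply, add_mul] using congrArg (· 2) hg
  have hg0 : g 0 = 0 := (mul_eq_zero.1 h0).resolve_right ha
  have hg12 : g 1 = g 2 := sub_eq_zero.1 ((mul_eq_zero.1 h1).resolve_right hb)
  have hg1 : g 1 = 0 := by
    have := (mul_eq_zero.1 h2).resolve_right hc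
    rw [hg0, ← hg12] at this
    linarith
  intro i
  fin_cases i
  exacts [hg0, hg1, hg12 ▸ hg1]

lemma span_v3_triple_eq_top {a b c : ℝ} (ha : a ≠ 0) (hb : b ≠ 0) (hc : c ≠ 0) :
    Submodule.span ℝ (Set.range ![v3 a 0 c, v3 0 b c, v3 0 (-b) c]) = ⊤ :=
  (linearIndependent_v3_triple ha hb hc).span_eq_top_of_card_eq_finrank (by simp)

lemma sqrt_one_sub_sq_lt_one {ε : ℝ} (hε : ε ≠ 0) : √(1 - ε ^ 2) < 1 := by
  rw [Real.sqrt_lt' one_pos]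
  linarith [pow_pos (abs_pos.2 hε) 2, sq_abs ε]

theorem isolable_not_deficient_example (α : ℝ) (hα0 : 0 < α) (hα1 : α < 1)
    (x : E3) (y : Fin 3 → E3)
    (hx : x = v3 0 0 1)
    (hy1 : y 0 = v3 (Real.sqrt (1 - α ^ 2)) 0 α)
    (hy2 : y 1 = v3 0 (Real.sqrt (1 - α ^ 2)) α)
    (hy3 : y 2 = v3 0 (-Real.sqrt (1 - α ^ 2)) α) :
    (∀ i : Fin 3, |⟪x, y i⟫| = α) ∧
    Submodule.span ℝ (Set.range y) = ⊤ ∧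
    ∀ ε : ℝ, 0 < ε → ε < α →
      ‖v3 (-ε) 0 (Real.sqrt (1 - ε ^ 2))‖ = 1 ∧
      ∀ i : Fin 3, |⟪v3 (-ε) 0 (Real.sqrt (1 - ε ^ 2)), y i⟫| < α := by
  set s := √(1 - α ^ 2)
  have hs0 : 0 < s := Real.sqrt_pos.2 (by nlinarith)
  have hs1 : s ≤ 1 := Real.sqrt_le_one.2 (by nlinarith)
  have hy : y = ![v3 s 0 α, v3 0 s α, v3 0 (-s) α] := by
    ext1 i; fin_cases i <;> assumption
  subst hx hy
  refine ⟨?_, span_v3_triple_eq_top hs0.ne' hs0.ne' hα0.ne', fun ε hε0 hεα => ⟨?_, ?_⟩⟩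
  · intro i; fin_cases i <;> simp [inner_v3, hα0.le]
  · rw [norm_v3, Real.sq_sqrt (by nlinarith), neg_sq, zero_pow two_ne_zero, add_zero,
      add_sub_cancel, Real.sqrt_one]
  · set t := √(1 - ε ^ 2)
    have ht0 : 0 ≤ t := Real.sqrt_nonneg _
    have ht1 : t < 1 := sqrt_one_sub_sq_lt_one hε0.ne'
    have h0 : |-(ε * s) + t * α| < α := abs_lt.2 ⟨by nlinarith, by nlinarith⟩
    have h12 : |t * α| < α := by
      rw [abs_of_nonneg (by positivity)]
      exact mul_lt_of_lt_one_left hα0 ht1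
    intro i
    fin_cases i
    · simpa [inner_v3] using h0
    all_goals simpa [inner_v3] using h12
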